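/- Assume the continuum hypothesis (2^ℵ₀ = ℵ₁). Then for every infinite cardinal κ: l^∞(κ) has a regular singular state if and only if κ is Ulam measurable, and B(l²(κ)) has a regular singular state if and only if κ is Ulam measurable. -/

import Mathlib

open scoped ComplexOrder

noncomputable section

/-- The C*-algebra `l^∞(X)` of bounded complex-valued functions on `X`. -/
abbrev Linf (X : Type) := lp (fun _ : X => ℂ) ⊤

/-- The indicator function `χ_S` as an element of `l^∞(X)`. -/
def chi {X : Type} (S : Set X) : Linf X :=
  ⟨S.indicator 1, memℓp_infty ⟨1, by
    rintro r ⟨x, rfl⟩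
    by_cases h : x ∈ S <;> simp [Set.indicator_apply, h]⟩⟩

/-- A state on `l^∞(X)`: a linear functional with `φ(1) = 1` which is nonnegative on
pointwise nonnegative functions. -/
def IsStateLinf {X : Type} (φ : Linf X →ₗ[ℂ] ℂ) : Prop :=
  φ 1 = 1 ∧ ∀ f : Linf X, (∀ x : X, 0 ≤ f x) → 0 ≤ φ f

/-- A singular state on `l^∞(X)`: it vanishes on all finitely supported functions. -/
def SingularLinf {X : Type} (φ : Linf X →ₗ[ℂ] ℂ) : Prop :=
  ∀ f : Linf X, (Function.support fun x => f x).Finite → φ f = 0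

/-- A regular state on `l^∞(X)`: a countable union of null sets is null. -/
def RegularLinf {X : Type} (φ : Linf X →ₗ[ℂ] ℂ) : Prop :=
  ∀ S : ℕ → Set X, (∀ n, φ (chi (S n)) = 0) → φ (chi (⋃ n, S n)) = 0

/-- A finitely additive probability measure defined on all subsets of `X`. -/
def IsFAProb {X : Type} (μ : Set X → ℝ) : Prop :=
  (∀ S : Set X, 0 ≤ μ S) ∧ μ Set.univ = 1 ∧
    ∀ S T : Set X, S ∩ T = ∅ → μ (S ∪ T) = μ S + μ T

/-- The measure vanishes on singletons. -/
def VanishesOnSingletons {X : Type} (μ : Set X → ℝ) : Prop :=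
  ∀ x : X, μ {x} = 0

/-- A regular finitely additive measure: countable unions of null sets are null. -/
def RegularMeas {X : Type} (μ : Set X → ℝ) : Prop :=
  ∀ S : ℕ → Set X, (∀ n, μ (S n) = 0) → μ (⋃ n, S n) = 0

/-- The Hilbert space `l²(X)`. -/
abbrev L2 (X : Type) := lp (fun _ : X => ℂ) 2

/-- The standard orthonormal basis vector `e_α` of `l²(X)`. -/
def stdBasis {X : Type} (α : X) : L2 X :=
  letI := Classical.decEq X
  lp.single 2 α 1

variable {H : Type} [NormedAddCommGroup H] [InnerProductSpace ℂ H] [CompleteSpace H]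

/-- A state on `B(H)`: a linear functional with `φ(1) = 1` which is nonnegative on
positive operators. -/
def IsStateB (φ : (H →L[ℂ] H) →ₗ[ℂ] ℂ) : Prop :=
  φ 1 = 1 ∧ ∀ x : H →L[ℂ] H, (∀ v : H, 0 ≤ (inner ℂ (x v) v : ℂ)) → 0 ≤ φ x

/-- A projection in `B(H)`: a self-adjoint idempotent. -/
def IsProjB (p : H →L[ℂ] H) : Prop := star p = p ∧ p * p = p

/-- The orthogonal projection of `H` onto the closed linear span of the set `s`. -/
def projCLM (s : Set H) : H →L[ℂ] H :=
  haveI : CompleteSpace ((Submodule.span ℂ s).topologicalClosure) :=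
    (Submodule.isClosed_topologicalClosure _).completeSpace_coe
  ((Submodule.span ℂ s).topologicalClosure.subtypeL).comp
    (Submodule.orthogonalProjection (Submodule.span ℂ s).topologicalClosure)

/-- A singular state on `B(H)`: it vanishes on all compact operators. -/
def SingularB (φ : (H →L[ℂ] H) →ₗ[ℂ] ℂ) : Prop :=
  ∀ x : H →L[ℂ] H, IsCompactOperator ⇑x → φ x = 0

/-- A regular state on `B(H)`: if `φ(qₙ) = 0` for a countable family of projections, then
`φ(⋁ qₙ) = 0`. -/
def RegularB (φ : (H →L[ℂ] H) →ₗ[ℂ] ℂ) : Prop :=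
  ∀ q : ℕ → H →L[ℂ] H, (∀ n, IsProjB (q n)) → (∀ n, φ (q n) = 0) →
    φ (projCLM (⋃ n, Set.range ⇑(q n))) = 0

/-- A countably additive measure. -/
def CountablyAdditiveMeas {X : Type} (μ : Set X → ℝ) : Prop :=
  ∀ S : ℕ → Set X, Pairwise (Function.onFun Disjoint S) →
    μ (⋃ n, S n) = ∑' n, μ (S n)

/-- A `{0,1}`-valued measure. -/
def TwoValuedMeas {X : Type} (μ : Set X → ℝ) : Prop :=
  ∀ S : Set X, μ S = 0 ∨ μ S = 1


/-!
A regular singular state `φ` on `l^∞(X)` yields the finitely additive probability measure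
`S ↦ φ(χ_S)`, which vanishes on points and whose null sets form a σ-ideal; a state on `B(l²(X))`
is first restricted to the multiplication operators, a copy of `l^∞(X)`. Ulam's matrix shows that
no such measure lives on a set of size `ℵ₁`, and under CH this applies to `ℕ → ℕ`. If the measure
had no atom, recording in which piece of finer and finer countable covers by small sets a point
lies would give a map `X → (ℕ → ℕ)` with null fibres, whose push-forward contradicts Ulam. So it
has an atom, and normalising it on the atom gives a two-valued, countably additive measure
vanishing on points.

Conversely, such a measure is a countably complete nonprincipal ultrafilter `U`, and the limit
along `U` of `f`, respectively of the diagonal entries `⟪e_α, T e_α⟫`, is a regular singular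
state: compact operators have diagonal entries tending to `0`, and by countable completeness the
limits of countably many diagonals are attained on a single set of `U`.
-/

open Filter Set Topology

/-! ### Finitely additive probability measures -/

namespace IsFAProb

variable {X : Type} {μ : Set X → ℝ}

theorem measure_empty (hμ : IsFAProb μ) : μ ∅ = 0 := by
  simpa using hμ.2.2 ∅ ∅ (inter_self ∅)

theorem union (hμ : IsFAProb μ) {S T : Set X} (h : Disjoint S T) : μ (S ∪ T) = μ S + μ T :=
  hμ.2.2 S T h.inter_eq

theorem diff_add (hμ : IsFAProb μ) {S T : Set X} (h : S ⊆ T) : μ (T \ S) + μ S = μ T := by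
  rw [← hμ.union disjoint_sdiff_left, sdiff_union_of_subset h]

theorem mono (hμ : IsFAProb μ) {S T : Set X} (h : S ⊆ T) : μ S ≤ μ T := by
  linarith [hμ.diff_add h, hμ.1 (T \ S)]

theorem le_one (hμ : IsFAProb μ) (S : Set X) : μ S ≤ 1 :=
  hμ.2.1 ▸ hμ.mono (subset_univ S)

theorem compl (hμ : IsFAProb μ) (S : Set X) : μ Sᶜ = 1 - μ S := by
  linarith [hμ.union (disjoint_compl_right (a := S)), union_compl_self S ▸ hμ.2.1]

theorem union_le (hμ : IsFAProb μ) (S T : Set X) : μ (S ∪ T) ≤ μ S + μ T := by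
  rw [← union_sdiff_self, hμ.union disjoint_sdiff_right]
  linarith [hμ.mono (sdiff_subset : T \ S ⊆ T)]

theorem eq_zero_of_subset (hμ : IsFAProb μ) {S T : Set X} (h : S ⊆ T) (hT : μ T = 0) :
    μ S = 0 :=
  le_antisymm (hT ▸ hμ.mono h) (hμ.1 S)

theorem measure_biUnion_finset (hμ : IsFAProb μ) {ι : Type*} {f : ι → Set X} (s : Finset ι)
    (hf : (s : Set ι).PairwiseDisjoint f) : μ (⋃ i ∈ s, f i) = ∑ i ∈ s, μ (f i) := by
  classical
  induction s using Finset.induction_on with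
  | empty => simpa using hμ.measure_empty
  | insert i s hi ih =>
    rw [Finset.coe_insert, pairwiseDisjoint_insert_of_notMem (Finset.mem_coe.not.2 hi)] at hf
    rw [Finset.set_biUnion_insert, Finset.sum_insert hi, hμ.union, ih hf.1]
    exact disjoint_iUnion₂_right.2 fun j hj => hf.2 j hj

theorem finite_setOf_lt (hμ : IsFAProb μ) {ι : Type*} {s : Set ι} {f : ι → Set X}
    (hs : s.PairwiseDisjoint f) {ε : ℝ} (hε : 0 < ε) : {i ∈ s | ε < μ (f i)}.Finite := by
  by_contra hinf
  obtain ⟨n, hn⟩ := exists_nat_gt ε⁻¹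
  obtain ⟨t, hts, rfl⟩ := Set.Infinite.exists_subset_card_eq hinf n
  have hsum : t.card • ε ≤ ∑ i ∈ t, μ (f i) :=
    Finset.card_nsmul_le_sum t _ ε fun i hi => (hts hi).2.le
  rw [← hμ.measure_biUnion_finset t (hs.subset fun i hi => (hts hi).1), nsmul_eq_mul] at hsum
  have := (inv_lt_iff_one_lt_mul₀ hε).1 hn
  linarith [hμ.le_one (⋃ i ∈ t, f i)]

theorem countable_setOf_ne_zero (hμ : IsFAProb μ) {ι : Type*} {s : Set ι} {f : ι → Set X}
    (hs : s.PairwiseDisjoint f) : {i ∈ s | μ (f i) ≠ 0}.Countable := by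
  refine (countable_iUnion fun m : ℕ => (hμ.finite_setOf_lt hs (Nat.one_div_pos_of_nat
    (n := m))).countable).mono fun i ⟨his, hi⟩ => ?_
  obtain ⟨m, hm⟩ := exists_nat_one_div_lt (lt_of_le_of_ne (hμ.1 (f i)) hi.symm)
  exact mem_iUnion.2 ⟨m, his, hm⟩

theorem map (hμ : IsFAProb μ) {Y : Type} (f : X → Y) : IsFAProb (fun V => μ (f ⁻¹' V)) :=
  ⟨fun _ => hμ.1 _, hμ.2.1, fun V W h => by
    simpa [preimage_union] using hμ.2.2 _ _ (by rw [← preimage_inter, h, preimage_empty])⟩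

theorem measure_sUnion_eq_zero (hμ : IsFAProb μ) (hreg : RegularMeas μ) {𝒮 : Set (Set X)}
    (h𝒮 : 𝒮.Countable) (h : ∀ S ∈ 𝒮, μ S = 0) : μ (⋃₀ 𝒮) = 0 := by
  rcases 𝒮.eq_empty_or_nonempty with rfl | hne
  · simpa using hμ.measure_empty
  obtain ⟨f, rfl⟩ := h𝒮.exists_eq_range hne
  rw [sUnion_range]
  exact hreg f fun n => h _ ⟨n, rfl⟩

theorem measure_countable_eq_zero (hμ : IsFAProb μ) (hreg : RegularMeas μ)
    (hsing : VanishesOnSingletons μ) {S : Set X} (hS : S.Countable) : μ S = 0 := by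
  simpa using
    hμ.measure_sUnion_eq_zero hreg (hS.image singleton) (by simpa using fun x _ => hsing x)

theorem aleph0_lt_mk (hμ : IsFAProb μ) (hreg : RegularMeas μ)
    (hsing : VanishesOnSingletons μ) : Cardinal.aleph0 < Cardinal.mk X := by
  by_contra! h
  have := hμ.measure_countable_eq_zero hreg hsing
    (countable_univ_iff.2 (Cardinal.mk_le_aleph0_iff.1 h))
  exact one_ne_zero (hμ.2.1 ▸ this)

theorem cond (hμ : IsFAProb μ) {A : Set X} (hA : μ A ≠ 0) :
    IsFAProb (fun S => μ (S ∩ A) / μ A) := by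
  refine ⟨fun S => div_nonneg (hμ.1 _) (hμ.1 A), by simp [hA], fun S T hST => ?_⟩
  dsimp only
  rw [union_inter_distrib_right, hμ.union, add_div]
  exact (disjoint_iff_inter_eq_empty.2 hST).mono inter_subset_left inter_subset_left

theorem regularMeas_of_countablyAdditive (hμ : IsFAProb μ) (hCA : CountablyAdditiveMeas μ) :
    RegularMeas μ := fun S hS => by
  rw [← iUnion_disjointed, hCA _ (disjoint_disjointed S)]
  simp [fun n => hμ.eq_zero_of_subset (disjointed_subset S n) (hS n)]

theorem countablyAdditive_of_twoValued (hμ : IsFAProb μ) (h2 : TwoValuedMeas μ)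
    (hreg : RegularMeas μ) : CountablyAdditiveMeas μ := by
  intro S hS
  by_cases h : ∃ k, μ (S k) = 1
  · obtain ⟨k, hk⟩ := h
    have hrest : ∀ j ≠ k, μ (S j) = 0 := fun j hj =>
      hμ.eq_zero_of_subset (hS hj).subset_compl_right (by rw [hμ.compl, hk, sub_self])
    rw [tsum_eq_single k hrest, hk]
    exact le_antisymm (hμ.le_one _) (hk ▸ hμ.mono (subset_iUnion S k))
  · push Not at h
    have h0 : ∀ n, μ (S n) = 0 := fun n => (h2 (S n)).resolve_right (h n)
    simp [hreg S h0, h0]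

end IsFAProb

theorem RegularMeas.map {X Y : Type} {μ : Set X → ℝ} (hreg : RegularMeas μ) (f : X → Y) :
    RegularMeas (fun V => μ (f ⁻¹' V)) := fun S hS => by
  simpa only [preimage_iUnion] using hreg _ hS

/-! ### Ulam's theorem and atoms under CH -/

theorem not_vanishesOnSingletons_of_countable_Iio {W : Type} [LinearOrder W]
    (hIio : ∀ b : W, (Iio b).Countable) {ρ : Set W → ℝ} (hρ : IsFAProb ρ)
    (hreg : RegularMeas ρ) : ¬ VanishesOnSingletons ρ := by
  intro hsing
  -- Ulam's matrix: each row `A a ·` covers `Ioi a`, whose complement `Iic a` is null, so some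
  -- entry of each row is non-null; each column consists of disjoint sets, so only countably many
  -- of its entries are non-null. Hence `W` would be countable, hence null.
  choose ι hι using fun b => Set.countable_iff_exists_injective.1 (hIio b)
  set A : W → ℕ → Set W := fun a n => {b | ∃ h : a < b, ι b ⟨a, h⟩ = n}
  have hcol : ∀ n, (univ : Set W).PairwiseDisjoint fun a => A a n := by
    rintro n a - a' - hne
    refine disjoint_left.2 ?_
    rintro b ⟨h, rfl⟩ ⟨h', e⟩
    exact hne (congrArg Subtype.val (hι b e.symm))
  have hrow : ∀ a, ∃ n, ρ (A a n) ≠ 0 := by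
    intro a
    by_contra! h
    have hcover : univ ⊆ Iic a ∪ ⋃ n, A a n := fun b _ =>
      (le_or_gt b a).imp id fun hab => mem_iUnion.2 ⟨_, hab, rfl⟩
    have := (hρ.mono hcover).trans (hρ.union_le _ _)
    rw [hρ.2.1, hreg _ h, ← Iio_insert,
      hρ.measure_countable_eq_zero hreg hsing ((hIio a).insert a)] at this
    norm_num at this
  have huniv : (univ : Set W).Countable :=
    (countable_iUnion fun n => hρ.countable_setOf_ne_zero (hcol n)).mono
      fun a _ => by obtain ⟨n, hn⟩ := hrow a; exact mem_iUnion.2 ⟨n, mem_univ a, hn⟩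
  exact one_ne_zero (hρ.2.1 ▸ hρ.measure_countable_eq_zero hreg hsing huniv)

theorem not_vanishesOnSingletons_of_mk_le_aleph_one {W : Type}
    (hW : Cardinal.mk W ≤ Cardinal.aleph 1) {ρ : Set W → ℝ} (hρ : IsFAProb ρ)
    (hreg : RegularMeas ρ) : ¬ VanishesOnSingletons ρ := by
  obtain ⟨e⟩ : Nonempty (W ↪ (Cardinal.aleph 1).ord.ToType) := by
    rwa [← Cardinal.le_def, Cardinal.mk_toType, Cardinal.card_ord]
  let : LinearOrder W := LinearOrder.lift' e e.injective
  refine not_vanishesOnSingletons_of_countable_Iio (fun b => ?_) hρ hreg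
  have : Cardinal.mk (Iio (e b)) < Cardinal.aleph 1 := by simpa using Cardinal.mk_Iio_lt (e b)
  exact (Cardinal.le_aleph0_iff_set_countable.1 (Cardinal.lt_aleph_one_iff.1 this)).preimage
    e.injective

theorem mk_nat_fun_le_aleph_one (hCH : (2 : Cardinal.{0}) ^ Cardinal.aleph0 = Cardinal.aleph 1) :
    Cardinal.mk (ℕ → ℕ) ≤ Cardinal.aleph 1 := by
  simp [Cardinal.power_self_eq, ← hCH]

theorem exists_measure_preimage_singleton_ne_zero
    (hCH : (2 : Cardinal.{0}) ^ Cardinal.aleph0 = Cardinal.aleph 1) {X : Type}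
    {μ : Set X → ℝ} (hμ : IsFAProb μ) (hreg : RegularMeas μ) (f : X → ℕ → ℕ) :
    ∃ g, μ (f ⁻¹' {g}) ≠ 0 := by
  by_contra! h
  exact not_vanishesOnSingletons_of_mk_le_aleph_one (mk_nat_fun_le_aleph_one hCH) (hμ.map f)
    (hreg.map f) h

def IsAtomless {X : Type} (μ : Set X → ℝ) : Prop :=
  ∀ B, μ B ≠ 0 → ∃ C ⊆ B, μ C ≠ 0 ∧ μ (B \ C) ≠ 0

namespace IsFAProb

variable {X : Type} {μ : Set X → ℝ}

theorem exists_subset_ne_zero_le (hμ : IsFAProb μ) (hμa : IsAtomless μ) {B : Set X}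
    (hB : μ B ≠ 0) {ε : ℝ} (hε : 0 < ε) : ∃ C ⊆ B, μ C ≠ 0 ∧ μ C ≤ ε := by
  have halve : ∀ k : ℕ, ∃ C ⊆ B, μ C ≠ 0 ∧ μ C ≤ (1 / 2) ^ k := by
    intro k
    induction k with
    | zero => exact ⟨B, subset_rfl, hB, by simpa using hμ.le_one B⟩
    | succ k ih =>
      obtain ⟨C, hCB, hC, hCk⟩ := ih
      obtain ⟨D, hDC, hD, hCD⟩ := hμa C hC
      have := hμ.diff_add hDC
      rw [pow_succ]
      rcases le_total (μ D) (μ (C \ D)) with h | h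
      · exact ⟨D, hDC.trans hCB, hD, by linarith⟩
      · exact ⟨C \ D, sdiff_subset.trans hCB, hCD, by linarith⟩
  obtain ⟨k, hk⟩ := exists_pow_lt_of_lt_one hε (by norm_num : (1 / 2 : ℝ) < 1)
  obtain ⟨C, hCB, hC, hCk⟩ := halve k
  exact ⟨C, hCB, hC, hCk.trans hk.le⟩

theorem exists_iUnion_eq_univ_le (hμ : IsFAProb μ) (hμa : IsAtomless μ) {ε : ℝ} (hε : 0 < ε) :
    ∃ P : ℕ → Set X, ⋃ n, P n = univ ∧ ∀ n, μ (P n) ≤ ε := by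
  -- A maximal disjoint family of small non-null sets is countable, and it leaves a null
  -- remainder since otherwise a small non-null subset of the remainder could be added.
  obtain ⟨F, ⟨hFdisj, hFsmall⟩, hFmax⟩ :=
    zorn_subset {F : Set (Set X) | F.PairwiseDisjoint id ∧ ∀ B ∈ F, μ B ≠ 0 ∧ μ B ≤ ε}
      fun c hc hchain => ⟨⋃₀ c, ⟨(hchain.pairwiseDisjoint_sUnion id).2 fun F hF => (hc hF).1,
        fun B ⟨F, hF, hB⟩ => (hc hF).2 B hB⟩, fun F hF => subset_sUnion_of_mem hF⟩
  have hrest : μ (⋃₀ F)ᶜ = 0 := by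
    by_contra hR
    obtain ⟨C, hCR, hC, hCε⟩ := hμ.exists_subset_ne_zero_le hμa hR hε
    have hCF : C ∉ F := fun hCF => hC <| by
      rw [subset_empty_iff.1 fun x hx => hCR hx (subset_sUnion_of_mem hCF hx), hμ.measure_empty]
    have hins : (insert C F).PairwiseDisjoint id ∧ ∀ B ∈ insert C F, μ B ≠ 0 ∧ μ B ≤ ε := by
      refine ⟨hFdisj.insert fun B hB _ => ?_, ?_⟩
      · exact disjoint_of_subset_left hCR
          (disjoint_compl_left.mono_right (subset_sUnion_of_mem hB))
      · rintro B (rfl | hB)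
        exacts [⟨hC, hCε⟩, hFsmall B hB]
    exact hCF (hFmax hins (subset_insert C F) (mem_insert C F))
  have hFcount : F.Countable := (hμ.countable_setOf_ne_zero hFdisj).mono fun B hB =>
    show B ∈ F ∧ _ from ⟨hB, (hFsmall B hB).1⟩
  obtain ⟨P, hP⟩ := (hFcount.insert (⋃₀ F)ᶜ).exists_eq_range (insert_nonempty _ _)
  refine ⟨P, by rw [← sUnion_range, ← hP, sUnion_insert, compl_union_self], fun n => ?_⟩
  rcases (hP ▸ mem_range_self n : P n ∈ insert (⋃₀ F)ᶜ F) with h | h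
  · rw [h, hrest]
    exact hε.le
  · exact (hFsmall _ h).2

theorem not_isAtomless (hCH : (2 : Cardinal.{0}) ^ Cardinal.aleph0 = Cardinal.aleph 1)
    (hμ : IsFAProb μ) (hreg : RegularMeas μ) : ¬ IsAtomless μ := by
  intro hμa
  choose P hPcover hPsmall using fun k : ℕ =>
    hμ.exists_iUnion_eq_univ_le hμa (Nat.one_div_pos_of_nat (n := k))
  choose idx hidx using fun x k => mem_iUnion.1 ((hPcover k).symm ▸ mem_univ x)
  obtain ⟨g, hg⟩ := exists_measure_preimage_singleton_ne_zero hCH hμ hreg idx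
  refine hg (le_antisymm (ge_of_tendsto' tendsto_one_div_add_atTop_nhds_zero_nat fun k => ?_)
    (hμ.1 _))
  exact (hμ.mono fun x (hx : idx x = g) => hx ▸ hidx x k).trans (hPsmall k (g k))

theorem exists_ulam_measure (hCH : (2 : Cardinal.{0}) ^ Cardinal.aleph0 = Cardinal.aleph 1)
    (hμ : IsFAProb μ) (hreg : RegularMeas μ) (hsing : VanishesOnSingletons μ) :
    ∃ m : Set X → ℝ, IsFAProb m ∧ TwoValuedMeas m ∧ CountablyAdditiveMeas m ∧
      VanishesOnSingletons m := by
  obtain ⟨A, hA, hatom⟩ : ∃ A, μ A ≠ 0 ∧ ∀ C ⊆ A, μ C = 0 ∨ μ (A \ C) = 0 := by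
    by_contra! h
    exact hμ.not_isAtomless hCH hreg h
  have hm := hμ.cond hA
  have h2 : TwoValuedMeas fun S => μ (S ∩ A) / μ A := fun S => by
    rcases hatom (S ∩ A) inter_subset_right with h | h
    · simp [h]
    · have := hμ.diff_add (inter_subset_right : S ∩ A ⊆ A)
      right
      rw [h, zero_add] at this
      simp [this, hA]
  have hregm : RegularMeas fun S => μ (S ∩ A) / μ A := fun S hS => by
    simp only [div_eq_zero_iff, hA, or_false, iUnion_inter] at hS ⊢
    exact hreg _ hS
  refine ⟨_, hm, h2, hm.countablyAdditive_of_twoValued h2 hregm, fun x => ?_⟩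
  simp [hμ.eq_zero_of_subset inter_subset_left (hsing x)]

end IsFAProb

/-! ### States on `l^∞` and measures -/

section StateMeasure

variable {X : Type} {φ : Linf X →ₗ[ℂ] ℂ}

theorem chi_apply (S : Set X) (x : X) : chi S x = S.indicator 1 x :=
  rfl

theorem chi_univ : chi (univ : Set X) = 1 := by
  ext x
  rw [lp.infty_coeFn_one, chi_apply, indicator_univ]

theorem chi_union {S T : Set X} (h : Disjoint S T) : chi (S ∪ T) = chi S + chi T :=
  lp.ext (indicator_union_of_disjoint h 1)

theorem chi_nonneg (S : Set X) (x : X) : 0 ≤ chi S x :=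
  indicator_nonneg (fun _ _ => zero_le_one) x

theorem IsStateLinf.apply_chi_eq_re (hφ : IsStateLinf φ) (S : Set X) :
    φ (chi S) = (φ (chi S)).re :=
  Complex.eq_re_of_ofReal_le (r := 0) (by simpa using hφ.2 _ (chi_nonneg S))

theorem IsStateLinf.isFAProb (hφ : IsStateLinf φ) : IsFAProb fun S => (φ (chi S)).re :=
  ⟨fun S => (Complex.nonneg_iff.1 (hφ.2 _ (chi_nonneg S))).1, by simp [chi_univ, hφ.1],
    fun S T h => by simp [chi_union (disjoint_iff_inter_eq_empty.2 h)]⟩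

theorem IsStateLinf.regularMeas (hφ : IsStateLinf φ) (hreg : RegularLinf φ) :
    RegularMeas fun S => (φ (chi S)).re := fun S hS => by
  simp only at hS ⊢
  simp [hreg S fun n => by rw [hφ.apply_chi_eq_re, hS n, Complex.ofReal_zero]]

theorem SingularLinf.vanishesOnSingletons (hφ : SingularLinf φ) :
    VanishesOnSingletons fun S => (φ (chi S)).re := fun x => by
  dsimp only
  rw [hφ _ ((finite_singleton x).subset fun y hy => ?_), Complex.zero_re]
  by_contra h
  exact hy (indicator_of_notMem h 1)

theorem IsStateLinf.ulam_measurable (hCH : (2 : Cardinal.{0}) ^ Cardinal.aleph0 = Cardinal.aleph 1)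
    (hφ : IsStateLinf φ) (hsing : SingularLinf φ) (hreg : RegularLinf φ) :
    Cardinal.aleph0 < Cardinal.mk X ∧ ∃ μ : Set X → ℝ, IsFAProb μ ∧ TwoValuedMeas μ ∧
      CountablyAdditiveMeas μ ∧ VanishesOnSingletons μ :=
  ⟨hφ.isFAProb.aleph0_lt_mk (hφ.regularMeas hreg) hsing.vanishesOnSingletons,
    hφ.isFAProb.exists_ulam_measure hCH (hφ.regularMeas hreg) hsing.vanishesOnSingletons⟩

end StateMeasure

/-! ### States from countably complete ultrafilters -/

theorem IsFAProb.exists_ultrafilter {X : Type} {μ : Set X → ℝ} (hμ : IsFAProb μ)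
    (h2 : TwoValuedMeas μ) (hreg : RegularMeas μ) (hsing : VanishesOnSingletons μ) :
    ∃ U : Ultrafilter X, CountableInterFilter (U : Filter X) ∧ (U : Filter X) ≤ cofinite := by
  let F : Filter X := .ofCountableUnion {S | μ S = 0}
    (fun _ h𝒮 h => hμ.measure_sUnion_eq_zero hreg h𝒮 h)
    fun _ hT _ hST => hμ.eq_zero_of_subset hST hT
  have hF : ∀ S, Sᶜ ∉ F ↔ S ∈ F := fun S => by
    simp only [F, mem_ofCountableUnion, compl_compl]
    rcases h2 S with h | h <;> simp [h, hμ.compl]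
  refine ⟨.ofComplNotMemIff F hF, show CountableInterFilter F by simp only [F]; infer_instance,
    le_cofinite_iff_compl_singleton_mem.2 fun x => ?_⟩
  show {x}ᶜᶜ ∈ {S | μ S = 0}
  simpa using hsing x

section UltrafilterLimit

variable {X : Type} (U : Ultrafilter X)

theorem tendsto_limUnder_linf (f : Linf X) : Tendsto f U (𝓝 (limUnder (U : Filter X) f)) := by
  refine tendsto_nhds_limUnder ?_
  obtain ⟨c, -, hc⟩ := (isCompact_closedBall (0 : ℂ) ‖f‖).ultrafilter_le_nhds (U.map f) <| by
    rw [Ultrafilter.coe_map, le_principal_iff, mem_map]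
    exact univ_mem' fun x =>
      mem_closedBall_zero_iff.2 (lp.norm_apply_le_norm ENNReal.top_ne_zero f x)
  exact ⟨c, hc⟩

def limState : Linf X →ₗ[ℂ] ℂ where
  toFun f := limUnder (U : Filter X) f
  map_add' f g := ((tendsto_limUnder_linf U f).add (tendsto_limUnder_linf U g)).limUnder_eq
  map_smul' c f := ((tendsto_limUnder_linf U f).const_mul c).limUnder_eq

theorem tendsto_limState (f : Linf X) : Tendsto f U (𝓝 (limState U f)) :=
  tendsto_limUnder_linf U f

theorem limState_eq {f : Linf X} {c : ℂ} (h : Tendsto f U (𝓝 c)) : limState U f = c :=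
  h.limUnder_eq

theorem isStateLinf_limState : IsStateLinf (limState U) :=
  ⟨limState_eq U (by rw [lp.infty_coeFn_one]; exact tendsto_const_nhds),
    fun f hf => ge_of_tendsto' (tendsto_limState U f) hf⟩

theorem limState_chi_of_mem {S : Set X} (h : S ∈ U) : limState U (chi S) = 1 :=
  limState_eq U <| tendsto_const_nhds.congr' <| eventually_of_mem h fun _ hx =>
    (indicator_of_mem hx 1).symm

theorem limState_chi_of_notMem {S : Set X} (h : S ∉ U) : limState U (chi S) = 0 :=
  limState_eq U <| tendsto_const_nhds.congr' <|
    eventually_of_mem (Ultrafilter.compl_mem_iff_notMem.2 h) fun _ hx =>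
      (indicator_of_notMem hx 1).symm

theorem regularLinf_limState [CountableInterFilter (U : Filter X)] : RegularLinf (limState U) := by
  intro S hS
  have hnot : ∀ n, S n ∉ U := fun n h => one_ne_zero (limState_chi_of_mem U h ▸ hS n)
  refine limState_chi_of_notMem U fun h => Ultrafilter.compl_notMem_iff.2 h ?_
  rw [compl_iUnion]
  exact countable_iInter_mem.2 fun n => Ultrafilter.compl_mem_iff_notMem.2 (hnot n)

theorem limState_eq_zero_of_tendsto_cofinite (hU : (U : Filter X) ≤ cofinite) {f : Linf X}
    (hf : Tendsto f cofinite (𝓝 0)) : limState U f = 0 :=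
  limState_eq U (hf.mono_left hU)

theorem singularLinf_limState (hU : (U : Filter X) ≤ cofinite) : SingularLinf (limState U) :=
  fun _ hf => limState_eq_zero_of_tendsto_cofinite U hU <| tendsto_const_nhds.congr' <|
    eventually_of_mem hf.compl_mem_cofinite fun _ hx => (Function.notMem_support.1 hx).symm

end UltrafilterLimit

theorem Filter.Tendsto.eventually_eq_of_countableInterFilter {α Y : Type*} [MetricSpace Y]
    {l : Filter α} [CountableInterFilter l] {f : α → Y} {c : Y} (h : Tendsto f l (𝓝 c)) :
    ∀ᶠ x in l, f x = c := by
  have : ∀ᶠ x in l, ∀ n : ℕ, dist (f x) c < 1 / (n + 1) :=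
    eventually_countable_forall.2 fun n => Metric.tendsto_nhds.1 h _ Nat.one_div_pos_of_nat
  filter_upwards [this] with x hx
  exact dist_le_zero.1 (ge_of_tendsto' tendsto_one_div_add_atTop_nhds_zero_nat fun n => (hx n).le)

/-! ### Operators on Hilbert space -/

theorem Orthonormal.tendsto_inner_cofinite {𝕜 E ι : Type*} [RCLike 𝕜] [NormedAddCommGroup E]
    [InnerProductSpace 𝕜 E] {e : ι → E} (he : Orthonormal 𝕜 e) (x : E) :
    Tendsto (fun i => inner 𝕜 x (e i)) cofinite (𝓝 0) := by
  rw [tendsto_zero_iff_norm_tendsto_zero]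
  simpa [norm_inner_symm] using (he.inner_products_summable x).tendsto_cofinite_zero.sqrt

theorem IsCompactOperator.tendsto_cofinite_apply_orthonormal {𝕜 E F ι : Type*} [RCLike 𝕜]
    [NormedAddCommGroup E] [InnerProductSpace 𝕜 E] [CompleteSpace E]
    [NormedAddCommGroup F] [InnerProductSpace 𝕜 F] [CompleteSpace F]
    {T : E →L[𝕜] F} (hT : IsCompactOperator T) {e : ι → E} (he : Orthonormal 𝕜 e) :
    Tendsto (fun i => T (e i)) cofinite (𝓝 0) := by
  -- `T ∘ e` stays in a compact set, and each of its cluster points is weakly `0`.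
  obtain ⟨K, hK, hTK⟩ := hT.image_closedBall_subset_compact 1
  refine hK.tendsto_nhds_of_unique_mapClusterPt
    (Eventually.of_forall fun i => hTK ⟨e i, by simp [he.1 i], rfl⟩) fun y _ hy => ?_
  have hweak : Tendsto (fun i => inner 𝕜 y (T (e i))) cofinite (𝓝 0) := by
    simp_rw [← ContinuousLinearMap.adjoint_inner_left]
    exact he.tendsto_inner_cofinite _
  have hyy := hy.tendsto_comp
    ((continuous_const.inner continuous_id : Continuous fun z => inner 𝕜 y z).tendsto y)
  exact inner_self_eq_zero.1 (eq_of_nhds_neBot (ClusterPt.mono hyy hweak))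

theorem isCompactOperator_of_forall_mem {𝕜 E F : Type*} [RCLike 𝕜] [NormedAddCommGroup E]
    [NormedSpace 𝕜 E] [NormedAddCommGroup F] [NormedSpace 𝕜 F] {T : E →L[𝕜] F}
    (V : Submodule 𝕜 F) [FiniteDimensional 𝕜 V] (h : ∀ x, T x ∈ V) : IsCompactOperator T :=
  (isCompactOperator_of_locallyCompactSpace_dom (T.codRestrict V h)).clm_comp V.subtypeL

theorem mem_orthogonal_span {𝕜 E : Type*} [RCLike 𝕜] [NormedAddCommGroup E]
    [InnerProductSpace 𝕜 E] {s : Set E} {v : E} (h : ∀ u ∈ s, inner 𝕜 u v = 0) :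
    v ∈ (Submodule.span 𝕜 s)ᗮ := fun _ hu =>
  Submodule.mem_orthogonal_singleton_iff_inner_left.1 <| Submodule.span_le.2
    (fun w hw => Submodule.mem_orthogonal_singleton_iff_inner_left.2 (h w hw)) hu

theorem IsProjB.inner_apply_left {q : H →L[ℂ] H} (hq : IsProjB q) (u v : H) :
    inner ℂ (q u) v = inner ℂ u (q v) := by
  rw [← ContinuousLinearMap.adjoint_inner_right, ← ContinuousLinearMap.star_eq_adjoint, hq.1]

theorem IsProjB.inner_self_apply {q : H →L[ℂ] H} (hq : IsProjB q) (v : H) :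
    inner ℂ v (q v) = inner ℂ (q v) (q v) := by
  rw [hq.inner_apply_left]
  exact congrArg (inner ℂ v) (DFunLike.congr_fun hq.2 v).symm

theorem projCLM_eq_starProjection (s : Set H) :
    projCLM s = (Submodule.span ℂ s).topologicalClosure.starProjection :=
  rfl

theorem projCLM_apply_eq_zero {s : Set H} {v : H} (h : ∀ u ∈ s, inner ℂ u v = 0) :
    projCLM s v = 0 := by
  rw [projCLM_eq_starProjection, Submodule.starProjection_apply_eq_zero_iff,
    Submodule.orthogonal_closure]
  exact mem_orthogonal_span h

-- `hw` says that `w` lies in `(span s)ᗮᗮ`, the closure of the span of `s`.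
theorem projCLM_apply_eq {s : Set H} {v w : H}
    (hw : ∀ z, (∀ u ∈ s, inner ℂ u z = 0) → inner ℂ z w = 0)
    (hvw : ∀ u ∈ s, inner ℂ u (v - w) = 0) : projCLM s v = w := by
  rw [projCLM_eq_starProjection]
  refine Submodule.eq_starProjection_of_mem_orthogonal ?_ ?_
  · rw [← Submodule.orthogonal_orthogonal_eq_closure]
    exact fun z hz => hw z fun u hu => hz u (Submodule.subset_span hu)
  · rw [Submodule.orthogonal_closure]
    exact mem_orthogonal_span hvw

/-! ### Diagonal entries and multiplication operators on `l²` -/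

section DiagEntries

variable {X : Type}

theorem coe_default_hilbertBasis : ⇑(default : HilbertBasis X ℂ (L2 X)) = stdBasis :=
  rfl

theorem orthonormal_stdBasis : Orthonormal ℂ (stdBasis : X → L2 X) :=
  coe_default_hilbertBasis (X := X) ▸ HilbertBasis.orthonormal _

theorem inner_stdBasis_left (α : X) (v : L2 X) : inner ℂ (stdBasis α) v = v α :=
  ((default : HilbertBasis X ℂ (L2 X)).repr_apply_apply v α).symm

theorem norm_inner_stdBasis_apply_le (T : L2 X →L[ℂ] L2 X) (α : X) :
    ‖inner ℂ (stdBasis α) (T (stdBasis α))‖ ≤ ‖T (stdBasis α)‖ := by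
  simpa [orthonormal_stdBasis.1 α] using norm_inner_le_norm (𝕜 := ℂ) (stdBasis α) (T (stdBasis α))

def diagEntries : (L2 X →L[ℂ] L2 X) →ₗ[ℂ] Linf X where
  toFun T := ⟨fun α => inner ℂ (stdBasis α) (T (stdBasis α)), memℓp_infty ⟨‖T‖, by
    rintro _ ⟨α, rfl⟩
    simpa [orthonormal_stdBasis.1 α] using
      (norm_inner_stdBasis_apply_le T α).trans (T.le_opNorm (stdBasis α))⟩⟩
  map_add' S T := lp.ext <| funext fun α => inner_add_right _ _ _
  map_smul' c T := lp.ext <| funext fun α => inner_smul_right _ _ _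

theorem diagEntries_apply (T : L2 X →L[ℂ] L2 X) (α : X) :
    diagEntries T α = inner ℂ (stdBasis α) (T (stdBasis α)) :=
  rfl

theorem IsStateLinf.comp_diagEntries {ψ : Linf X →ₗ[ℂ] ℂ} (hψ : IsStateLinf ψ) :
    IsStateB (ψ ∘ₗ diagEntries) := by
  refine ⟨?_, fun T hT => hψ.2 _ fun α => ?_⟩
  · have : diagEntries (1 : L2 X →L[ℂ] L2 X) = 1 := by
      ext α
      rw [lp.infty_coeFn_one, diagEntries_apply, one_apply_eq_self,
        inner_self_eq_norm_sq_to_K, orthonormal_stdBasis.1 α]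
      simp
    rw [LinearMap.comp_apply, this, hψ.1]
  · rw [diagEntries_apply, ← inner_conj_symm]
    exact star_nonneg_iff.2 (hT _)

variable (U : Ultrafilter X)

theorem singularB_limState_comp_diagEntries (hU : (U : Filter X) ≤ cofinite) :
    SingularB (limState U ∘ₗ diagEntries) := fun T hT =>
  limState_eq_zero_of_tendsto_cofinite U hU <| squeeze_zero_norm (norm_inner_stdBasis_apply_le T)
    (tendsto_norm_zero.comp (hT.tendsto_cofinite_apply_orthonormal orthonormal_stdBasis))

theorem regularB_limState_comp_diagEntries [CountableInterFilter (U : Filter X)] :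
    RegularB (limState U ∘ₗ diagEntries) := by
  intro q hq hq0
  have hker : ∀ᶠ α in (U : Filter X), ∀ n, q n (stdBasis α) = 0 := by
    refine eventually_countable_forall.2 fun n => ?_
    have := tendsto_limState U (diagEntries (q n))
    rw [← LinearMap.comp_apply, hq0 n] at this
    filter_upwards [this.eventually_eq_of_countableInterFilter] with α hα
    rw [diagEntries_apply, (hq n).inner_self_apply] at hα
    exact inner_self_eq_zero.1 hα
  refine limState_eq U (tendsto_const_nhds.congr' ?_)
  filter_upwards [hker] with α hα
  rw [diagEntries_apply, projCLM_apply_eq_zero, inner_zero_right]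
  rintro _ ⟨_, ⟨n, rfl⟩, v, rfl⟩
  rw [(hq n).inner_apply_left, hα n, inner_zero_right]

end DiagEntries

section Multiplication

variable {X : Type}

theorem mem_span_stdBasis {F : Set X} (hF : F.Finite) {g : L2 X} (hg : ∀ x ∉ F, g x = 0) :
    g ∈ Submodule.span ℂ (stdBasis '' F) := by
  have hsum := (default : HilbertBasis X ℂ (L2 X)).hasSum_repr g
  rw [coe_default_hilbertBasis] at hsum
  rw [hsum.unique (hasSum_sum_of_ne_finset_zero (s := hF.toFinset) fun x hx =>
    smul_eq_zero_of_left (hg x (by simpa using hx)) _)]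
  exact Submodule.sum_mem _ fun x hx =>
    Submodule.smul_mem _ _ (Submodule.subset_span ⟨x, hF.mem_toFinset.1 hx, rfl⟩)

theorem memℓp_mul (f : Linf X) (g : L2 X) : Memℓp (fun x => f x * g x) 2 :=
  ((lp.memℓp g).norm.const_mul ‖f‖).mono fun x => by
    rw [norm_mul]
    exact mul_le_mul_of_nonneg_right (lp.norm_apply_le_norm ENNReal.top_ne_zero f x)
      (norm_nonneg _)

def mulOp : Linf X →ₗ[ℂ] L2 X →L[ℂ] L2 X where
  toFun f := LinearMap.mkContinuous
    { toFun g := ⟨fun x => f x * g x, memℓp_mul f g⟩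
      map_add' g h := lp.ext <| funext fun x => mul_add (f x) (g x) (h x)
      map_smul' c g := lp.ext <| funext fun x => mul_left_comm (f x) c (g x) }
    ‖f‖ fun g => by
      refine (lp.norm_mono two_ne_zero (y := ‖f‖ • g) fun x => ?_).trans_eq
        (by rw [norm_smul, norm_norm])
      simpa [norm_mul] using mul_le_mul_of_nonneg_right
        (lp.norm_apply_le_norm ENNReal.top_ne_zero f x) (norm_nonneg (g x))
  map_add' f f' := ContinuousLinearMap.ext fun g => lp.ext <| funext fun x =>
    add_mul (f x) (f' x) (g x)
  map_smul' c f := ContinuousLinearMap.ext fun g => lp.ext <| funext fun x =>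
    mul_assoc c (f x) (g x)

theorem mulOp_apply (f : Linf X) (g : L2 X) (x : X) : mulOp f g x = f x * g x :=
  rfl

theorem mulOp_one : mulOp (1 : Linf X) = 1 :=
  ContinuousLinearMap.ext fun g => lp.ext <| funext fun x => by
    simp [mulOp_apply, lp.infty_coeFn_one]

theorem inner_mulOp_self_nonneg {f : Linf X} (hf : ∀ x, 0 ≤ f x) (g : L2 X) :
    0 ≤ inner ℂ (mulOp f g) g := by
  rw [lp.inner_eq_tsum]
  refine tsum_nonneg fun x => ?_
  rw [mulOp_apply, RCLike.inner_apply, map_mul,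
    Complex.conj_eq_iff_im.2 (Complex.nonneg_iff.1 (hf x)).2.symm, mul_left_comm]
  exact mul_nonneg (hf x) (mul_star_self_nonneg _)

theorem isCompactOperator_mulOp {f : Linf X} (hf : (Function.support fun x => f x).Finite) :
    IsCompactOperator (mulOp f) := by
  have := FiniteDimensional.span_of_finite ℂ (hf.image stdBasis)
  refine isCompactOperator_of_forall_mem _ fun g => mem_span_stdBasis hf fun x hx => ?_
  rw [mulOp_apply, Function.notMem_support.1 hx, zero_mul]

theorem isProjB_mulOp_chi (S : Set X) : IsProjB (mulOp (chi S)) := by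
  refine ⟨?_, ContinuousLinearMap.ext fun g => lp.ext <| funext fun x => ?_⟩
  · rw [ContinuousLinearMap.star_eq_adjoint, eq_comm, ContinuousLinearMap.eq_adjoint_iff]
    intro g h
    rw [lp.inner_eq_tsum, lp.inner_eq_tsum]
    refine tsum_congr fun x => ?_
    simp only [mulOp_apply, RCLike.inner_apply, chi_apply]
    by_cases hx : x ∈ S <;> simp [hx]
  · show chi S x * (chi S x * g x) = chi S x * g x
    by_cases hx : x ∈ S <;> simp [chi_apply, hx]

theorem projCLM_iUnion_range_mulOp_chi (S : ℕ → Set X) :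
    projCLM (⋃ n, range (mulOp (chi (S n)))) = mulOp (chi (⋃ n, S n)) := by
  refine ContinuousLinearMap.ext fun v => projCLM_apply_eq (fun z hz => ?_) ?_
  · have hz0 : ∀ n, ∀ α ∈ S n, z α = 0 := fun n α hα => by
      rw [← hz _ (mem_iUnion.2 ⟨n, stdBasis α, rfl⟩), (isProjB_mulOp_chi _).inner_apply_left,
        inner_stdBasis_left, mulOp_apply, chi_apply, indicator_of_mem hα, Pi.one_apply, one_mul]
    have hz' : mulOp (chi (⋃ n, S n)) z = 0 := by
      refine lp.ext <| funext fun x => ?_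
      rw [mulOp_apply, chi_apply]
      by_cases hx : x ∈ ⋃ n, S n
      · obtain ⟨n, hn⟩ := mem_iUnion.1 hx
        simp [hz0 n x hn]
      · simp [hx]
    rw [← (isProjB_mulOp_chi _).inner_apply_left, hz', inner_zero_left]
  · rintro _ ⟨_, ⟨n, rfl⟩, g, rfl⟩
    have hv : mulOp (chi (S n)) (v - mulOp (chi (⋃ n, S n)) v) = 0 := by
      refine lp.ext <| funext fun x => ?_
      simp only [mulOp_apply, chi_apply, lp.coeFn_sub, Pi.sub_apply]
      by_cases hx : x ∈ S n
      · simp [hx, mem_iUnion.2 ⟨n, hx⟩]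
      · simp [hx]
    rw [(isProjB_mulOp_chi _).inner_apply_left, hv, inner_zero_right]

variable {φ : (L2 X →L[ℂ] L2 X) →ₗ[ℂ] ℂ}

theorem IsStateB.comp_mulOp (hφ : IsStateB φ) : IsStateLinf (φ ∘ₗ mulOp) :=
  ⟨by rw [LinearMap.comp_apply, mulOp_one, hφ.1], fun _ hf => hφ.2 _ (inner_mulOp_self_nonneg hf)⟩

theorem SingularB.comp_mulOp (hφ : SingularB φ) : SingularLinf (φ ∘ₗ mulOp) :=
  fun _ hf => hφ _ (isCompactOperator_mulOp hf)

theorem RegularB.comp_mulOp (hφ : RegularB φ) : RegularLinf (φ ∘ₗ mulOp) := fun S hS => by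
  rw [LinearMap.comp_apply, ← projCLM_iUnion_range_mulOp_chi]
  exact hφ _ (fun n => isProjB_mulOp_chi (S n)) hS

end Multiplication

theorem ch_regular_singular_iff_ulam_measurable_general
    (hCH : (2 : Cardinal.{0}) ^ Cardinal.aleph0 = Cardinal.aleph 1)
    (X : Type) :
    ((∃ φ : Linf X →ₗ[ℂ] ℂ, IsStateLinf φ ∧ SingularLinf φ ∧ RegularLinf φ) ↔
      (Cardinal.aleph0 < Cardinal.mk X ∧ ∃ μ : Set X → ℝ, IsFAProb μ ∧ TwoValuedMeas μ ∧
        CountablyAdditiveMeas μ ∧ VanishesOnSingletons μ)) ∧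
    ((∃ φ : (L2 X →L[ℂ] L2 X) →ₗ[ℂ] ℂ, IsStateB φ ∧ SingularB φ ∧ RegularB φ) ↔
      (Cardinal.aleph0 < Cardinal.mk X ∧ ∃ μ : Set X → ℝ, IsFAProb μ ∧ TwoValuedMeas μ ∧
        CountablyAdditiveMeas μ ∧ VanishesOnSingletons μ)) := by
  refine ⟨⟨fun ⟨φ, hst, hsing, hreg⟩ => hst.ulam_measurable hCH hsing hreg,
      fun ⟨_, μ, hμ, h2, hCA, hsing⟩ => ?_⟩,
    ⟨fun ⟨φ, hst, hsing, hreg⟩ =>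
      hst.comp_mulOp.ulam_measurable hCH hsing.comp_mulOp hreg.comp_mulOp,
      fun ⟨_, μ, hμ, h2, hCA, hsing⟩ => ?_⟩⟩ <;>
  obtain ⟨U, hU, hcof⟩ :=
    hμ.exists_ultrafilter h2 (hμ.regularMeas_of_countablyAdditive hCA) hsing
  · exact ⟨limState U, isStateLinf_limState U, singularLinf_limState U hcof,
      regularLinf_limState U⟩
  · exact ⟨limState U ∘ₗ diagEntries, (isStateLinf_limState U).comp_diagEntries,
      singularB_limState_comp_diagEntries U hcof, regularB_limState_comp_diagEntries U⟩

/-- Theorem 27 of "Quantum measurable cardinals": assuming the continuum hypothesis,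
`l^∞(κ)` and `B(l²(κ))` have regular singular states iff `κ` is Ulam measurable. -/
theorem ch_regular_singular_iff_ulam_measurable
    (hCH : (2 : Cardinal.{0}) ^ Cardinal.aleph0 = Cardinal.aleph 1)
    (X : Type) (hX : Cardinal.aleph0 ≤ Cardinal.mk X) :
    ((∃ φ : Linf X →ₗ[ℂ] ℂ, IsStateLinf φ ∧ SingularLinf φ ∧ RegularLinf φ) ↔
      (Cardinal.aleph0 < Cardinal.mk X ∧ ∃ μ : Set X → ℝ, IsFAProb μ ∧ TwoValuedMeas μ ∧
        CountablyAdditiveMeas μ ∧ VanishesOnSingletons μ)) ∧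
    ((∃ φ : (L2 X →L[ℂ] L2 X) →ₗ[ℂ] ℂ, IsStateB φ ∧ SingularB φ ∧ RegularB φ) ↔
      (Cardinal.aleph0 < Cardinal.mk X ∧ ∃ μ : Set X → ℝ, IsFAProb μ ∧ TwoValuedMeas μ ∧
        CountablyAdditiveMeas μ ∧ VanishesOnSingletons μ)) :=
  ch_regular_singular_iff_ulam_measurable_general hCH X
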